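/- arXiv:1803.03931 — 4 statements merged into one kernel-verified Lean document; each statement's English description precedes it below -/
import Mathlib

section
/- Let A in GL_N(k[x]) be straight, and let α = (a,b) be a point of k × k^N. Then the Zariski closure of the forward orbit {f_A^n(α) : n ≥ 0} equals k × C, where C is the Zariski closure in k^N of the orbit 𝔾_A·b = {g·b : g ∈ 𝔾_A}. -/
noncomputable section

/-- Evaluate a polynomial matrix at a point of `k`. -/
def evalMat {k : Type*} [CommRing k] {N : ℕ} (A : Matrix (Fin N) (Fin N) (Polynomial k))
    (x : k) : Matrix (Fin N) (Fin N) k :=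
  A.map (Polynomial.eval x)

/-- The skew-linear self-map `f_A : (x, y) ↦ (x + 1, A(x)·y)` of `k × k^N`. -/
def skewMap {k : Type*} [CommRing k] {N : ℕ} (A : Matrix (Fin N) (Fin N) (Polynomial k)) :
    k × (Fin N → k) → k × (Fin N → k) :=
  fun p => (p.1 + 1, (evalMat A p.1).mulVec p.2)

/-- A subset of `k × k^N` (identified with `k^(N+1)`) is algebraic if it is the zero locus
of a set of polynomials in `N + 1` variables (variable `none` is `x`, variable `some i`
is `yᵢ`). -/
def IsAlg {k : Type*} [CommRing k] {N : ℕ} (V : Set (k × (Fin N → k))) : Prop :=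
  ∃ S : Set (MvPolynomial (Option (Fin N)) k),
    V = {p | ∀ f ∈ S, MvPolynomial.eval (fun i => Option.elim i p.1 p.2) f = 0}

/-- A subset of `k^N` is algebraic if it is the zero locus of a set of polynomials
in `N` variables. -/
def IsAlgN {k : Type*} [CommRing k] {N : ℕ} (W : Set (Fin N → k)) : Prop :=
  ∃ S : Set (MvPolynomial (Fin N) k),
    W = {y | ∀ f ∈ S, MvPolynomial.eval y f = 0}

/-- The group `𝔾_A ⊆ GL_N(k)`: invertible matrices stabilizing the fiber over `0` of every
algebraic subset of `k × k^N` invariant under `f_A`. -/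
def GA {k : Type*} [CommRing k] {N : ℕ} (A : Matrix (Fin N) (Fin N) (Polynomial k)) :
    Set (Matrix (Fin N) (Fin N) k) :=
  {g | IsUnit g.det ∧
    ∀ V : Set (k × (Fin N → k)), IsAlg V → skewMap A '' V = V →
      (fun y => g.mulVec y) '' {y : Fin N → k | ((0 : k), y) ∈ V} =
        {y : Fin N → k | ((0 : k), y) ∈ V}}

/-- The Zariski closure of a subset of `k^N`: the intersection of all algebraic subsets
containing it. -/
def zarClosureN {k : Type*} [CommRing k] {N : ℕ} (S : Set (Fin N → k)) : Set (Fin N → k) :=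
  ⋂₀ {W | IsAlgN W ∧ S ⊆ W}

/-- The Zariski closure of a subset of `k × k^N`. -/
def zarClosure1 {k : Type*} [CommRing k] {N : ℕ} (S : Set (k × (Fin N → k))) :
    Set (k × (Fin N → k)) :=
  ⋂₀ {W | IsAlg W ∧ S ⊆ W}

/-!
The closure `Z` of the forward orbit satisfies `f_A(Z) ⊆ Z`. As `f_A` is a polynomial
automorphism, the preimages of `Z` under the iterates of `f_A⁻¹` form a descending chain of
algebraic sets, which stabilizes by the Hilbert basis theorem; hence `f_A(Z) = Z`, and
straightness gives `Z = k × V₀`. Since every invariant algebraic set is a cylinder `k × W`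
and each `A(t)` maps `W` onto itself, all `A(t)` lie in the monoid `𝔾_A`; so does the
product of the `A(t)` along the orbit, which puts the orbit inside `k × C`. Conversely
`b ∈ V₀` and `𝔾_A` preserves `V₀`, so `C ⊆ V₀`.
-/

open MvPolynomial

section ZeroLocus

variable {k X Y σ τ : Type*} [Field k]

def IsZeroLocus (c : X → σ → k) (V : Set X) : Prop :=
  ∃ S : Set (MvPolynomial σ k), V = {x | ∀ f ∈ S, eval (c x) f = 0}

theorem isZeroLocus_sInter {c : X → σ → k} {𝒞 : Set (Set X)}
    (h : ∀ V ∈ 𝒞, IsZeroLocus c V) : IsZeroLocus c (⋂₀ 𝒞) := by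
  refine ⟨{f | ∃ V ∈ 𝒞, ∀ x ∈ V, eval (c x) f = 0}, Set.ext fun x => ⟨?_, ?_⟩⟩
  · rintro hx f ⟨V, hV, hf⟩
    exact hf x (hx V hV)
  · intro hx V hV
    obtain ⟨S, rfl⟩ := h V hV
    exact fun f hf => hx f ⟨_, hV, fun y hy => hy f hf⟩

theorem IsZeroLocus.eq_setOf_vanishingIdeal {c : X → σ → k} {V : Set X} (hV : IsZeroLocus c V) :
    V = {x | ∀ f ∈ vanishingIdeal k (c '' V), eval (c x) f = 0} := by
  obtain ⟨S, rfl⟩ := hV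
  refine Set.ext fun x => ⟨fun hx f hf => hf _ ⟨x, hx, rfl⟩, fun hx f hf => hx f ?_⟩
  rintro _ ⟨y, hy, rfl⟩
  exact hy f hf

theorem IsZeroLocus.exists_succ_eq_of_antitone [Finite σ] {c : X → σ → k} {Z : ℕ → Set X}
    (hZ : ∀ n, IsZeroLocus c (Z n)) (hanti : Antitone Z) : ∃ n, Z (n + 1) = Z n := by
  obtain ⟨n, hn⟩ := monotone_stabilizes_iff_noetherian.mpr inferInstance
    ⟨fun n => vanishingIdeal k (c '' Z n), fun m n hmn =>
      vanishingIdeal_anti_mono (Set.image_mono (hanti hmn))⟩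
  refine ⟨n, ?_⟩
  rw [(hZ (n + 1)).eq_setOf_vanishingIdeal, (hZ n).eq_setOf_vanishingIdeal]
  exact congrArg (fun I : Ideal _ => {x | ∀ f ∈ I, eval (c x) f = 0}) (hn (n + 1) n.le_succ).symm

def IsPolyMap (c : X → σ → k) (d : Y → τ → k) (φ : X → Y) : Prop :=
  ∃ P : τ → MvPolynomial σ k, ∀ x j, eval (c x) (P j) = d (φ x) j

theorem IsPolyMap.isZeroLocus_preimage {c : X → σ → k} {d : Y → τ → k} {φ : X → Y}
    (hφ : IsPolyMap c d φ) {V : Set Y} (hV : IsZeroLocus d V) : IsZeroLocus c (φ ⁻¹' V) := by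
  obtain ⟨P, hP⟩ := hφ
  obtain ⟨S, rfl⟩ := hV
  have heval : ∀ x f, eval (c x) (bind₁ P f) = eval (d (φ x)) f := fun x f => by
    rw [← funext (hP x)]
    exact eval₂Hom_bind₁ _ _ _ _
  refine ⟨bind₁ P '' S, Set.ext fun x => ⟨?_, ?_⟩⟩
  · rintro hx _ ⟨f, hf, rfl⟩
    rw [heval]
    exact hx f hf
  · intro hx f hf
    rw [← heval]
    exact hx _ ⟨f, hf, rfl⟩

theorem IsPolyMap.preimage_eq_of_preimage_subset [Finite σ] {c : X → σ → k} {ψ : X → X}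
    (hψ : IsPolyMap c c ψ) (hsurj : ψ.Surjective) {V : Set X} (hV : IsZeroLocus c V)
    (hsub : ψ ⁻¹' V ⊆ V) : ψ ⁻¹' V = V := by
  have hZ : ∀ n, IsZeroLocus c (ψ^[n] ⁻¹' V) := by
    intro n
    induction n with
    | zero => exact hV
    | succ n ih =>
      rw [Function.iterate_succ, Set.preimage_comp]
      exact hψ.isZeroLocus_preimage ih
  have hanti : Antitone fun n => ψ^[n] ⁻¹' V := antitone_nat_of_succ_le fun n => by
    rw [Function.iterate_succ', Set.preimage_comp]
    exact Set.preimage_mono hsub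
  obtain ⟨n, hn⟩ := IsZeroLocus.exists_succ_eq_of_antitone hZ hanti
  rw [Function.iterate_succ', Set.preimage_comp] at hn
  exact Set.preimage_injective.mpr (hsurj.iterate n) hn

end ZeroLocus

namespace SkewLinear

open scoped Matrix

variable {k : Type*} [Field k] {N : ℕ}

/-- `IsAlg V` is by definition `IsZeroLocus coords V`, and `IsAlgN W` is `IsZeroLocus id W`. -/
def coords (p : k × (Fin N → k)) : Option (Fin N) → k := fun i => Option.elim i p.1 p.2

theorem isAlg_zarClosure1 (S : Set (k × (Fin N → k))) : IsAlg (zarClosure1 S) :=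
  isZeroLocus_sInter fun _ hW => hW.1

theorem subset_zarClosure1 (S : Set (k × (Fin N → k))) : S ⊆ zarClosure1 S :=
  Set.subset_sInter fun _ hW => hW.2

theorem zarClosure1_subset {S W : Set (k × (Fin N → k))} (hW : IsAlg W) (hSW : S ⊆ W) :
    zarClosure1 S ⊆ W :=
  Set.sInter_subset_of_mem ⟨hW, hSW⟩

theorem isAlgN_zarClosureN (S : Set (Fin N → k)) : IsAlgN (zarClosureN S) :=
  isZeroLocus_sInter fun _ hW => hW.1

theorem zarClosureN_subset {S W : Set (Fin N → k)} (hW : IsAlgN W) (hSW : S ⊆ W) :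
    zarClosureN S ⊆ W :=
  Set.sInter_subset_of_mem ⟨hW, hSW⟩

theorem subset_zarClosureN (S : Set (Fin N → k)) : S ⊆ zarClosureN S :=
  Set.subset_sInter fun _ hW => hW.2

theorem isAlg_preimage_snd {W : Set (Fin N → k)} (hW : IsAlgN W) :
    IsAlg (Prod.snd ⁻¹' W : Set (k × (Fin N → k))) :=
  IsPolyMap.isZeroLocus_preimage (c := coords) (d := id) (φ := Prod.snd)
    ⟨fun i => X (some i), fun _ _ => eval_X _⟩ hW

theorem eval_polynomialAeval {σ : Type*} (x : σ → k) (t : MvPolynomial σ k) (q : Polynomial k) :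
    eval x (Polynomial.aeval t q) = q.eval (eval x t) := by
  rw [Polynomial.aeval_def, Polynomial.hom_eval₂, algebraMap_eq,
    show (eval x).comp C = RingHom.id k from RingHom.ext eval_C, Polynomial.eval₂_id]

theorem isPolyMap_fiberwiseLinear (u v : Polynomial k)
    (B : Matrix (Fin N) (Fin N) (Polynomial k)) :
    IsPolyMap coords coords
      fun p : k × (Fin N → k) => (u.eval p.1, evalMat B (v.eval p.1) *ᵥ p.2) := by
  refine ⟨fun j => Option.elim j (Polynomial.aeval (X none) u)
    fun i => ∑ j, Polynomial.aeval (Polynomial.aeval (X none) v) (B i j) * X (some j), ?_⟩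
  rintro p (_ | i) <;>
    simp [coords, evalMat, Matrix.mulVec, dotProduct, eval_polynomialAeval]

theorem evalMat_mul (B C : Matrix (Fin N) (Fin N) (Polynomial k)) (x : k) :
    evalMat (B * C) x = evalMat B x * evalMat C x :=
  Matrix.map_mul (f := Polynomial.evalRingHom x)

theorem evalMat_one (x : k) : evalMat (1 : Matrix (Fin N) (Fin N) (Polynomial k)) x = 1 :=
  Matrix.map_one _ Polynomial.eval_zero Polynomial.eval_one

theorem isUnit_det_evalMat {A : Matrix (Fin N) (Fin N) (Polynomial k)} (hA : IsUnit A.det)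
    (x : k) : IsUnit (evalMat A x).det := by
  rw [show evalMat A x = (Polynomial.evalRingHom x).mapMatrix A from rfl, ← RingHom.map_det]
  exact hA.map _

variable (A : Matrix (Fin N) (Fin N) (Polynomial k))

def skewMapInv : k × (Fin N → k) → k × (Fin N → k) :=
  fun p => (p.1 - 1, evalMat A⁻¹ (p.1 - 1) *ᵥ p.2)

theorem isPolyMap_skewMap : IsPolyMap coords coords (skewMap A) := by
  convert isPolyMap_fiberwiseLinear (Polynomial.X + 1) Polynomial.X A using 1
  funext p
  simp [skewMap]

theorem isPolyMap_skewMapInv : IsPolyMap coords coords (skewMapInv A) := by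
  convert isPolyMap_fiberwiseLinear (Polynomial.X - 1) (Polynomial.X - 1) A⁻¹ using 1
  funext p
  simp [skewMapInv]

variable {A}

theorem leftInverse_skewMapInv (hA : IsUnit A.det) :
    Function.LeftInverse (skewMapInv A) (skewMap A) := fun p => by
  simp only [skewMapInv, skewMap, add_sub_cancel_right, Matrix.mulVec_mulVec, ← evalMat_mul,
    Matrix.nonsing_inv_mul A hA, evalMat_one, Matrix.one_mulVec]

theorem rightInverse_skewMapInv (hA : IsUnit A.det) :
    Function.RightInverse (skewMapInv A) (skewMap A) := fun p => by
  simp only [skewMap, skewMapInv, sub_add_cancel, Matrix.mulVec_mulVec, ← evalMat_mul,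
    Matrix.mul_nonsing_inv A hA, evalMat_one, Matrix.one_mulVec]

theorem skewMap_image_zarClosure1 (hA : IsUnit A.det) {S : Set (k × (Fin N → k))}
    (hS : skewMap A '' S ⊆ S) : skewMap A '' zarClosure1 S = zarClosure1 S := by
  have himage := Set.image_eq_preimage_of_inverse (leftInverse_skewMapInv hA)
    (rightInverse_skewMapInv hA)
  have hforward : skewMap A '' zarClosure1 S ⊆ zarClosure1 S :=
    Set.image_subset_iff.mpr <| zarClosure1_subset
      ((isPolyMap_skewMap A).isZeroLocus_preimage (isAlg_zarClosure1 S))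
      ((Set.image_subset_iff.mp hS).trans (Set.preimage_mono (subset_zarClosure1 S)))
  rw [himage] at hforward ⊢
  exact (isPolyMap_skewMapInv A).preimage_eq_of_preimage_subset
    (leftInverse_skewMapInv hA).surjective (isAlg_zarClosure1 S) hforward

theorem fiber_skewMap_image (V : Set (k × (Fin N → k))) (t : k) :
    {y | (t + 1, y) ∈ skewMap A '' V} = (evalMat A t *ᵥ ·) '' {y | (t, y) ∈ V} := by
  ext y
  constructor
  · rintro ⟨⟨s, z⟩, hz, heq⟩
    obtain ⟨hs, rfl⟩ := Prod.ext_iff.mp heq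
    obtain rfl : s = t := add_right_cancel hs
    exact ⟨z, hz, rfl⟩
  · rintro ⟨z, hz, rfl⟩
    exact ⟨(t, z), hz, rfl⟩

theorem image_evalMat_mulVec_eq {W : Set (Fin N → k)}
    (h : skewMap A '' (Prod.snd ⁻¹' W) = Prod.snd ⁻¹' W) (t : k) :
    (evalMat A t *ᵥ ·) '' W = W := by
  have hfiber := fiber_skewMap_image (A := A) (Prod.snd ⁻¹' W) t
  rw [h] at hfiber
  exact hfiber.symm

def IsStraight (A : Matrix (Fin N) (Fin N) (Polynomial k)) : Prop :=
  ∀ V : Set (k × (Fin N → k)), IsAlg V → skewMap A '' V = V →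
    ∃ V₀ : Set (Fin N → k), IsAlgN V₀ ∧ V = {p : k × (Fin N → k) | p.2 ∈ V₀}

variable (A) in
theorem one_mem_GA : 1 ∈ GA A :=
  ⟨by simp, fun _ _ _ => by simp⟩

theorem mul_mem_GA {g h : Matrix (Fin N) (Fin N) k} (hg : g ∈ GA A) (hh : h ∈ GA A) :
    g * h ∈ GA A := by
  refine ⟨by rw [Matrix.det_mul]; exact hg.1.mul hh.1, fun V hV hinv => ?_⟩
  have hcomp : (fun y => (g * h) *ᵥ y) = (g *ᵥ ·) ∘ (h *ᵥ ·) :=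
    funext fun y => (Matrix.mulVec_mulVec y g h).symm
  rw [hcomp, Set.image_comp, hh.2 V hV hinv, hg.2 V hV hinv]

theorem evalMat_mem_GA (hA : IsUnit A.det) (hstraight : IsStraight A) (t : k) :
    evalMat A t ∈ GA A := by
  refine ⟨isUnit_det_evalMat hA t, fun V hV hinv => ?_⟩
  obtain ⟨W, -, rfl⟩ := hstraight V hV hinv
  exact image_evalMat_mulVec_eq hinv t

theorem exists_mem_GA_iterate_skewMap_snd (hA : IsUnit A.det) (hstraight : IsStraight A)
    (a : k) (b : Fin N → k) (n : ℕ) : ∃ g ∈ GA A, ((skewMap A)^[n] (a, b)).2 = g *ᵥ b := by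
  induction n with
  | zero => exact ⟨1, one_mem_GA A, (Matrix.one_mulVec b).symm⟩
  | succ n ih =>
    obtain ⟨g, hg, hgb⟩ := ih
    refine ⟨evalMat A ((skewMap A)^[n] (a, b)).1 * g,
      mul_mem_GA (evalMat_mem_GA hA hstraight _) hg, ?_⟩
    rw [Function.iterate_succ_apply', ← Matrix.mulVec_mulVec, ← hgb]
    rfl

end SkewLinear

open SkewLinear in
theorem stmt7_general {k : Type*} [Field k] {N : ℕ}
    (A : Matrix (Fin N) (Fin N) (Polynomial k)) (hA : IsUnit A.det)
    (hstraight : ∀ V : Set (k × (Fin N → k)), IsAlg V → skewMap A '' V = V →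
      ∃ V₀ : Set (Fin N → k), IsAlgN V₀ ∧ V = {p : k × (Fin N → k) | p.2 ∈ V₀})
    (a : k) (b : Fin N → k) :
    zarClosure1 {p : k × (Fin N → k) | ∃ n : ℕ, (skewMap A)^[n] (a, b) = p} =
      {p : k × (Fin N → k) |
        p.2 ∈ zarClosureN ((fun g : Matrix (Fin N) (Fin N) k => g.mulVec b) '' GA A)} := by
  set orbit := {p : k × (Fin N → k) | ∃ n : ℕ, (skewMap A)^[n] (a, b) = p}
  have hinv : skewMap A '' zarClosure1 orbit = zarClosure1 orbit := by
    refine skewMap_image_zarClosure1 hA ?_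
    rintro _ ⟨_, ⟨n, rfl⟩, rfl⟩
    exact ⟨n + 1, Function.iterate_succ_apply' _ _ _⟩
  obtain ⟨V₀, hV₀, hZ⟩ := hstraight _ (isAlg_zarClosure1 orbit) hinv
  refine subset_antisymm (zarClosure1_subset (isAlg_preimage_snd (isAlgN_zarClosureN _)) ?_) ?_
  · rintro _ ⟨n, rfl⟩
    obtain ⟨g, hg, hgb⟩ := exists_mem_GA_iterate_skewMap_snd hA hstraight a b n
    exact subset_zarClosureN _ ⟨g, hg, hgb.symm⟩
  · have hb : b ∈ V₀ := by
      have hα := subset_zarClosure1 orbit ⟨0, rfl⟩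
      rwa [hZ] at hα
    have hGb : (fun g : Matrix (Fin N) (Fin N) k => g.mulVec b) '' GA A ⊆ V₀ := by
      rintro _ ⟨g, hg, rfl⟩
      have hgV := hg.2 _ (isAlg_zarClosure1 orbit) hinv
      rw [hZ] at hgV
      exact hgV.subset ⟨b, hb, rfl⟩
    rw [hZ]
    exact fun p hp => zarClosureN_subset hV₀ hGb hp

/-- Proposition (Ghioca–Xie, Proposition 3.10): if `A ∈ GL_N(k[x])` is straight and
`α = (a, b) ∈ k × k^N`, then the Zariski closure of the `f_A`-orbit of `α` equals
`k × C`, where `C` is the Zariski closure of the orbit `𝔾_A · b`. -/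
theorem stmt7 {k : Type*} [Field k] [IsAlgClosed k] [CharZero k] {N : ℕ} (hN : 0 < N)
    (A : Matrix (Fin N) (Fin N) (Polynomial k)) (hA : IsUnit A.det)
    (hstraight : ∀ V : Set (k × (Fin N → k)), IsAlg V → skewMap A '' V = V →
      ∃ V₀ : Set (Fin N → k), IsAlgN V₀ ∧ V = {p : k × (Fin N → k) | p.2 ∈ V₀})
    (a : k) (b : Fin N → k) :
    zarClosure1 {p : k × (Fin N → k) | ∃ n : ℕ, (skewMap A)^[n] (a, b) = p} =
      {p : k × (Fin N → k) |
        p.2 ∈ zarClosureN ((fun g : Matrix (Fin N) (Fin N) k => g.mulVec b) '' GA A)} :=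
  stmt7_general A hA hstraight a b
end
end

section
/- Let N = 2 and let A = diag(a₁, a₂) be a constant diagonal matrix with a₁, a₂ nonzero elements of k. Then A is straight: every algebraic subset of k × k² invariant under the automorphism f_A : (x, y₁, y₂) ↦ (x+1, a₁y₁, a₂y₂) equals k × V₀ for some algebraic subset V₀ of k². -/
noncomputable section

/-!
Along the forward orbit `(x₀ + n, a₁ⁿ y₁, a₂ⁿ y₂)` of a point of an invariant set, every
polynomial `F` vanishing on the set gives an exponential polynomial `∑_μ P_μ(n) μⁿ` in `n`, one
term for each value `μ = a₁^i a₂^j` taken on the monomials of `F`. Exponential polynomials with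
distinct nonzero bases are linearly independent, so every `P_μ` vanishes identically; since
`F(x₀ + t, y) = ∑_μ P_μ(t)`, `F` vanishes on the whole line `k × {y}`. Hence the invariant set
is the cylinder over its slice at `x = 0`.
-/

open Polynomial Finset

section ExponentialPolynomial

variable {k : Type*} [Field k]

theorem Polynomial.eq_zero_of_C_mul_taylor_one_sub_C_mul_eq_zero {μ ν : k} (hμν : μ ≠ ν)
    {P : k[X]} (h : C μ * taylor 1 P - C ν * P = 0) : P = 0 := by
  have hlc := congrArg (coeff · P.natDegree) h
  simp only [coeff_sub, coeff_C_mul, coeff_taylor_natDegree, coeff_natDegree, coeff_zero,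
    ← sub_mul] at hlc
  exact leadingCoeff_eq_zero.mp ((mul_eq_zero.mp hlc).resolve_left (sub_ne_zero.mpr hμν))

theorem Polynomial.degree_taylor_one_sub_lt {P : k[X]} (hP : P ≠ 0) :
    (taylor 1 P - P).degree < P.degree :=
  degree_taylor P 1 ▸ degree_sub_lt_left (degree_taylor P 1) (by simpa using hP)
    (leadingCoeff_taylor 1 P)

theorem Polynomial.eq_zero_of_forall_eval_natCast_eq_zero [CharZero k] {P : k[X]}
    (h : ∀ n : ℕ, P.eval (n : k) = 0) : P = 0 :=
  P.eq_zero_of_infinite_isRoot <|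
    (Set.infinite_range_of_injective Nat.cast_injective).mono <| by
      rintro _ ⟨n, rfl⟩
      exact h n

theorem eq_zero_of_forall_sum_eval_mul_pow_eq_zero [CharZero k] {s : Finset k} (hs : 0 ∉ s)
    {P : k → k[X]} (h : ∀ n : ℕ, ∑ μ ∈ s, (P μ).eval (n : k) * μ ^ n = 0) :
    ∀ μ ∈ s, P μ = 0 := by
  classical
  induction s using Finset.induction_on generalizing P with
  | empty => simp
  | insert μ₀ s hμ₀ ih =>
    have hμ₀0 : μ₀ ≠ 0 := fun h0 => hs (h0 ▸ mem_insert_self μ₀ s)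
    have hs0 : 0 ∉ s := fun h0 => hs (mem_insert_of_mem h0)
    -- Induction on `deg P μ₀`; the operator `Q ↦ μ Q(t + 1) - μ₀ Q(t)` on the `μ`-th coefficient
    -- lowers the degree for `μ = μ₀` and is injective for `μ ≠ μ₀`.
    have htail : ∀ (Q : k[X]) (P : k → k[X]), P μ₀ = Q →
        (∀ n : ℕ, ∑ μ ∈ insert μ₀ s, (P μ).eval (n : k) * μ ^ n = 0) → ∀ μ ∈ s, P μ = 0 := by
      intro Q
      induction Q using degree_lt_wf.induction with
      | _ Q ihQ =>
        intro P hPQ hP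
        by_cases hQ : Q = 0
        · refine ih hs0 fun n => ?_
          simpa [sum_insert hμ₀, hPQ, hQ] using hP n
        set R : k → k[X] := fun μ => C μ * taylor 1 (P μ) - C μ₀ * P μ
        have hR : ∀ n : ℕ, ∑ μ ∈ insert μ₀ s, (R μ).eval (n : k) * μ ^ n = 0 := by
          intro n
          calc ∑ μ ∈ insert μ₀ s, (R μ).eval (n : k) * μ ^ n
              = ∑ μ ∈ insert μ₀ s, (P μ).eval ((n + 1 : ℕ) : k) * μ ^ (n + 1)
                - μ₀ * ∑ μ ∈ insert μ₀ s, (P μ).eval (n : k) * μ ^ n := by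
                rw [mul_sum, ← sum_sub_distrib]
                refine sum_congr rfl fun μ _ => ?_
                simp only [R, eval_sub, eval_mul, eval_C, taylor_eval]
                push_cast
                ring
            _ = 0 := by rw [hP (n + 1), hP n, mul_zero, sub_zero]
        have hRdeg : (R μ₀).degree < Q.degree := by
          rw [show R μ₀ = C μ₀ * (taylor 1 Q - Q) by simp only [R, hPQ]; ring,
            degree_C_mul hμ₀0]
          exact degree_taylor_one_sub_lt hQ
        intro μ hμ
        exact eq_zero_of_C_mul_taylor_one_sub_C_mul_eq_zero (ne_of_mem_of_not_mem hμ hμ₀)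
          (ihQ _ hRdeg R rfl hR μ hμ)
    have hs' := htail _ P rfl h
    have hhead : ∀ n : ℕ, (P μ₀).eval (n : k) = 0 := by
      intro n
      have := h n
      rw [sum_insert hμ₀, sum_eq_zero fun μ hμ => by rw [hs' μ hμ, eval_zero, zero_mul],
        add_zero] at this
      exact (mul_eq_zero.mp this).resolve_right (pow_ne_zero n hμ₀0)
    intro μ hμ
    rcases mem_insert.mp hμ with rfl | hμ
    · exact eq_zero_of_forall_eval_natCast_eq_zero hhead
    · exact hs' μ hμ

end ExponentialPolynomial

section Orbit

variable {k : Type*} [Field k] {ι : Type*} [Fintype ι]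

theorem MvPolynomial.eval_option_elim_mul_pow (F : MvPolynomial (Option ι) k) (u : k)
    (a y : ι → k) (n : ℕ) :
    MvPolynomial.eval (fun o => Option.elim o u fun i => a i ^ n * y i) F =
      ∑ d ∈ F.support, F.coeff d * u ^ d none * (∏ i, y i ^ d (some i)) *
        (∏ i, a i ^ d (some i)) ^ n := by
  rw [MvPolynomial.eval_eq']
  refine sum_congr rfl fun d _ => ?_
  simp only [Fintype.prod_option, Option.elim_none, Option.elim_some, mul_pow, prod_mul_distrib,
    ← prod_pow, ← pow_mul, mul_comm n]
  ring

theorem MvPolynomial.eval_option_elim_eq_zero_of_forall_nat [CharZero k] {a : ι → k}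
    (ha : ∀ i, a i ≠ 0) {F : MvPolynomial (Option ι) k} {x₀ : k} {y : ι → k}
    (h : ∀ n : ℕ, MvPolynomial.eval (fun o => Option.elim o (x₀ + n) fun i => a i ^ n * y i) F = 0)
    (x : k) : MvPolynomial.eval (fun o => Option.elim o x y) F = 0 := by
  classical
  set w : (Option ι →₀ ℕ) → k := fun d => ∏ i, a i ^ d (some i)
  set P : k → k[X] := fun μ => ∑ d ∈ F.support with w d = μ,
    Polynomial.C (F.coeff d * ∏ i, y i ^ d (some i)) * (Polynomial.C x₀ + Polynomial.X) ^ d none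
  have hexp : ∀ (t : k) (n : ℕ),
      MvPolynomial.eval (fun o => Option.elim o (x₀ + t) fun i => a i ^ n * y i) F =
        ∑ μ ∈ F.support.image w, (P μ).eval t * μ ^ n := by
    intro t n
    rw [MvPolynomial.eval_option_elim_mul_pow]
    refine (sum_image' _ fun d _ => ?_).symm
    simp only [P, Polynomial.eval_finsetSum, sum_mul]
    refine sum_congr rfl fun e he => ?_
    rw [← (mem_filter.mp he).2]
    simp only [w, Polynomial.eval_mul, Polynomial.eval_C, Polynomial.eval_pow, Polynomial.eval_add,
      Polynomial.eval_X]
    ring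
  have hw : 0 ∉ F.support.image w := by
    simp only [mem_image, not_exists, not_and]
    exact fun d _ => prod_ne_zero_iff.mpr fun i _ => pow_ne_zero _ (ha i)
  have hP := eq_zero_of_forall_sum_eval_mul_pow_eq_zero hw fun n => (hexp n n).symm.trans (h n)
  have hx := hexp (x - x₀) 0
  simp only [pow_zero, one_mul, mul_one, add_sub_cancel] at hx
  rw [hx]
  exact sum_eq_zero fun μ hμ => by rw [hP μ hμ, Polynomial.eval_zero]

end Orbit

theorem IsAlg.isAlgN_slice {k : Type*} [CommRing k] {N : ℕ} {V : Set (k × (Fin N → k))}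
    (hV : IsAlg V) (c : k) : IsAlgN {y | (c, y) ∈ V} := by
  obtain ⟨S, rfl⟩ := hV
  refine ⟨MvPolynomial.bind₁ (fun o => Option.elim o (MvPolynomial.C c) MvPolynomial.X) '' S, ?_⟩
  have heval : ∀ (F : MvPolynomial (Option (Fin N)) k) (y : Fin N → k),
      MvPolynomial.eval y
          (MvPolynomial.bind₁ (fun o => Option.elim o (MvPolynomial.C c) MvPolynomial.X) F) =
        MvPolynomial.eval (fun o => Option.elim o c y) F := by
    intro F y
    change MvPolynomial.eval₂Hom (RingHom.id k) y _ = _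
    rw [MvPolynomial.eval₂Hom_bind₁]
    refine congrArg (fun v => MvPolynomial.eval v F) (funext fun o => ?_)
    cases o <;> simp
  ext y
  simp [heval]

section Diagonal

variable {k : Type*} [CommRing k] {N : ℕ}

theorem skewMap_diagonal_C (a : Fin N → k) (p : k × (Fin N → k)) :
    skewMap (Matrix.diagonal fun i => C (a i)) p = (p.1 + 1, fun i => a i * p.2 i) := by
  refine Prod.ext rfl (funext fun i => ?_)
  simp [skewMap, evalMat, Matrix.diagonal_map, Matrix.mulVec_diagonal]

theorem skewMap_diagonal_C_iterate (a : Fin N → k) (p : k × (Fin N → k)) (n : ℕ) :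
    (skewMap (Matrix.diagonal fun i => C (a i)))^[n] p = (p.1 + n, fun i => a i ^ n * p.2 i) := by
  induction n with
  | zero => simp
  | succ n ih =>
    rw [Function.iterate_succ_apply', ih, skewMap_diagonal_C]
    ext
    · push_cast
      ring
    · simp only [pow_succ]
      ring

end Diagonal

theorem exists_isAlgN_eq_of_mapsTo_skewMap_diagonal {k : Type*} [Field k] [CharZero k] {N : ℕ}
    {a : Fin N → k} (ha : ∀ i, a i ≠ 0) {V : Set (k × (Fin N → k))} (hV : IsAlg V)
    (hmaps : Set.MapsTo (skewMap (Matrix.diagonal fun i => C (a i))) V V) :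
    ∃ V₀ : Set (Fin N → k), IsAlgN V₀ ∧ V = {p : k × (Fin N → k) | p.2 ∈ V₀} := by
  refine ⟨{y | (0, y) ∈ V}, hV.isAlgN_slice 0, ?_⟩
  have hline : ∀ x₀ x y, (x₀, y) ∈ V → (x, y) ∈ V := by
    obtain ⟨S, rfl⟩ := hV
    intro x₀ x y hp F hF
    refine MvPolynomial.eval_option_elim_eq_zero_of_forall_nat (x₀ := x₀) ha (fun n => ?_) x
    have horbit := hmaps.iterate n hp
    rw [skewMap_diagonal_C_iterate] at horbit
    exact horbit F hF
  ext ⟨x, y⟩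
  exact ⟨hline x 0 y, hline 0 x y⟩

theorem stmt8_general {k : Type*} [Field k] [CharZero k]
    (a₁ a₂ : k) (h₁ : a₁ ≠ 0) (h₂ : a₂ ≠ 0) :
    ∀ V : Set (k × (Fin 2 → k)), IsAlg V →
      skewMap !![Polynomial.C a₁, 0; 0, Polynomial.C a₂] '' V = V →
      ∃ V₀ : Set (Fin 2 → k), IsAlgN V₀ ∧ V = {p : k × (Fin 2 → k) | p.2 ∈ V₀} := by
  intro V hV hinv
  have hA : !![Polynomial.C a₁, 0; 0, Polynomial.C a₂] =
      Matrix.diagonal fun i => Polynomial.C (![a₁, a₂] i) := by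
    simp [Matrix.diagonal_fin_two]
  rw [hA] at hinv
  exact exists_isAlgN_eq_of_mapsTo_skewMap_diagonal (a := ![a₁, a₂])
    (Fin.forall_fin_two.mpr ⟨h₁, h₂⟩) hV
    (Set.mapsTo_iff_image_subset.mpr hinv.subset)

/-- Lemma (Ghioca–Xie, Lemma 3.11): for `N = 2` and a constant diagonal matrix
`A = diag(a₁, a₂)` with `a₁, a₂ ∈ k*`, the matrix `A` is straight: every algebraic subset of
`k × k²` invariant under `f_A : (x, y₁, y₂) ↦ (x+1, a₁y₁, a₂y₂)` equals `k × V₀` for some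
algebraic subset `V₀` of `k²`. -/
theorem stmt8 {k : Type*} [Field k] [IsAlgClosed k] [CharZero k]
    (a₁ a₂ : k) (h₁ : a₁ ≠ 0) (h₂ : a₂ ≠ 0) :
    ∀ V : Set (k × (Fin 2 → k)), IsAlg V →
      skewMap !![Polynomial.C a₁, 0; 0, Polynomial.C a₂] '' V = V →
      ∃ V₀ : Set (Fin 2 → k), IsAlgN V₀ ∧ V = {p : k × (Fin 2 → k) | p.2 ∈ V₀} :=
  stmt8_general a₁ a₂ h₁ h₂
end
end

section
/- Let a(x), b(x) be polynomials in k[x] and let c be a nonzero constant of k. If a(x) + b(x) = c·a(x+1) and x·a(x) + (x+1)·b(x) = c·b(x+1) hold as identities in k[x], then a(x) = b(x) = 0. In particular, there exist no coprime polynomials a, b in k[x] and nonzero c in k satisfying these two identities. -/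
/-!
Subtracting `X` times the first identity from the second gives `b(x) = c·(b(x+1) - x·a(x+1))`,
while the first gives `deg b ≤ deg a`. If `a ≠ 0` and `c ≠ 0`, the right-hand side has degree
`deg a + 1 > deg b`, which is absurd; so `a = 0`, and then `b = c·a(x+1) - a = 0`.
For `c = 0` the two displayed identities give `b = 0` and `a = -b` directly.
-/

open Polynomial

namespace Polynomial

variable {R : Type*}

theorem natDegree_comp_X_add_one [Semiring R] (p : R[X]) :
    (p.comp (X + 1)).natDegree = p.natDegree := by
  rw [← C_1, ← taylor_apply, natDegree_taylor]

theorem comp_X_add_one_ne_zero [Semiring R] {p : R[X]} (hp : p ≠ 0) : p.comp (X + 1) ≠ 0 := by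
  rwa [← C_1, ← taylor_apply, Ne, taylor_eq_zero]

theorem natDegree_le_of_add_eq_C_mul_comp [CommRing R] {a b : R[X]} {c : R}
    (h : a + b = C c * a.comp (X + 1)) : b.natDegree ≤ a.natDegree := by
  rw [eq_sub_of_add_eq' h]
  refine (natDegree_sub_le _ _).trans (max_le ?_ le_rfl)
  exact (natDegree_C_mul_le _ _).trans (natDegree_comp_X_add_one a).le

theorem eq_zero_of_eq_C_mul_comp_sub_X_mul [CommRing R] [IsDomain R] {a b : R[X]} {c : R}
    (hc : c ≠ 0) (hdeg : b.natDegree ≤ a.natDegree)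
    (h : b = C c * (b.comp (X + 1) - X * a.comp (X + 1))) : a = 0 := by
  by_contra ha
  have hXa : (X * a.comp (X + 1)).natDegree = a.natDegree + 1 := by
    rw [natDegree_X_mul (comp_X_add_one_ne_zero ha), natDegree_comp_X_add_one]
  have hdiff : (b.comp (X + 1) - X * a.comp (X + 1)).natDegree = a.natDegree + 1 := by
    rw [natDegree_sub_eq_right_of_natDegree_lt (by rw [hXa, natDegree_comp_X_add_one]; omega), hXa]
  have hb := congrArg natDegree h
  rw [natDegree_C_mul hc, hdiff] at hb
  omega

end Polynomial

theorem stmt12_general {k : Type*} [Field k] (a b : Polynomial k) (c : k)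
    (h1 : a + b = Polynomial.C c * a.comp (Polynomial.X + 1))
    (h2 : Polynomial.X * a + (Polynomial.X + 1) * b =
      Polynomial.C c * b.comp (Polynomial.X + 1)) :
    a = 0 ∧ b = 0 := by
  have hb : b = C c * (b.comp (X + 1) - X * a.comp (X + 1)) := by
    linear_combination h2 - X * h1
  obtain rfl | hc := eq_or_ne c 0
  · simp only [map_zero, zero_mul] at h1 hb
    exact ⟨by simpa [hb] using h1, hb⟩
  have ha : a = 0 := eq_zero_of_eq_C_mul_comp_sub_X_mul hc (natDegree_le_of_add_eq_C_mul_comp h1) hb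
  exact ⟨ha, by simpa [ha] using h1⟩

/-- From the proof of Proposition 3.14 in Ghioca–Xie: if `a, b ∈ k[x]` and `c ∈ k*` satisfy
`a(x) + b(x) = c·a(x+1)` and `x·a(x) + (x+1)·b(x) = c·b(x+1)`, then `a = b = 0`; in
particular no coprime pair `a, b` satisfies these identities. -/
theorem stmt12 {k : Type*} [Field k] [CharZero k] (a b : Polynomial k) (c : k) (hc : c ≠ 0)
    (h1 : a + b = Polynomial.C c * a.comp (Polynomial.X + 1))
    (h2 : Polynomial.X * a + (Polynomial.X + 1) * b =
      Polynomial.C c * b.comp (Polynomial.X + 1)) :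
    a = 0 ∧ b = 0 :=
  stmt12_general a b c h1 h2
end

section
/- Let a₁, a₂ be distinct nonzero elements of k and let d be a natural number. Then for every polynomial b(x) in k[x] of degree at most d, there exists a unique polynomial u(x) in k[x] of degree at most d such that a₂·u(x+1) − a₁·u(x) = b(x). Equivalently, the linear map P(x) ↦ a₂·P(x+1) − a₁·P(x) on the space of polynomials of degree at most d is bijective. -/
/-!
The map `P ↦ a₂ • P(X + 1) - a₁ • P` preserves degrees: the Taylor shift keeps the leading
coefficient, so the coefficient of `X ^ deg P` in the image is `(a₂ - a₁) • lc P ≠ 0`. A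
degree-preserving linear endomorphism of `k[X]` is injective, and it maps each finite-dimensional
space of polynomials of degree `< n` into itself, hence onto itself.
-/

open Polynomial

section
variable {R : Type*} [CommRing R]

noncomputable def shiftDiff (a₁ a₂ : R) : R[X] →ₗ[R] R[X] :=
  a₂ • taylor 1 - a₁ • LinearMap.id

theorem shiftDiff_apply (a₁ a₂ : R) (p : R[X]) :
    shiftDiff a₁ a₂ p = C a₂ * p.comp (X + 1) - C a₁ * p := by
  simp [shiftDiff, taylor_apply, smul_eq_C_mul]

theorem degree_shiftDiff [NoZeroDivisors R] {a₁ a₂ : R} (hne : a₁ ≠ a₂) (p : R[X]) :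
    (shiftDiff a₁ a₂ p).degree = p.degree := by
  rcases eq_or_ne p 0 with rfl | hp
  · simp
  have hle : (shiftDiff a₁ a₂ p).degree ≤ p.natDegree := by
    rw [← degree_eq_natDegree hp]
    exact (degree_sub_le _ _).trans <| max_le
      ((degree_smul_le _ _).trans (degree_taylor p 1).le) (degree_smul_le _ _)
  have hcoeff : (shiftDiff a₁ a₂ p).coeff p.natDegree = (a₂ - a₁) * p.leadingCoeff := by
    have htaylor : (taylor 1 p).coeff p.natDegree = p.leadingCoeff := by
      rw [← natDegree_taylor p 1]; exact leadingCoeff_taylor 1 p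
    simp only [shiftDiff, LinearMap.sub_apply, LinearMap.smul_apply, LinearMap.id_apply, coeff_sub,
      coeff_smul, htaylor, smul_eq_mul, sub_mul, leadingCoeff]
  rw [degree_eq_natDegree hp]
  exact degree_eq_of_le_of_coeff_ne_zero hle <| hcoeff ▸
    mul_ne_zero (sub_ne_zero.mpr hne.symm) (leadingCoeff_ne_zero.mpr hp)
end

theorem bijective_of_forall_degree_eq {K : Type*} [Field K] (f : K[X] →ₗ[K] K[X])
    (hf : ∀ p, (f p).degree = p.degree) : Function.Bijective f := by
  have hinj : Function.Injective f := by
    rw [← LinearMap.ker_eq_bot, LinearMap.ker_eq_bot']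
    intro p hp
    simpa [hp] using (hf p).symm
  refine ⟨hinj, fun b => ?_⟩
  set n := b.natDegree + 1
  have hmap : ∀ p ∈ degreeLT K n, f p ∈ degreeLT K n := fun p hp => by
    rwa [mem_degreeLT, hf, ← mem_degreeLT]
  have hsurj : Function.Surjective (f.restrict hmap) :=
    LinearMap.injective_iff_surjective.mp fun p q hpq => Subtype.ext (hinj congr(($hpq).1))
  have hb : b ∈ degreeLT K n :=
    mem_degreeLT.mpr <| degree_le_natDegree.trans_lt <| by exact_mod_cast Nat.lt_succ_self _
  obtain ⟨⟨u, _⟩, hu⟩ := hsurj ⟨b, hb⟩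
  exact ⟨u, congr(($hu).1)⟩

theorem stmt13_general {k : Type*} [Field k] (a₁ a₂ : k)
    (hne : a₁ ≠ a₂) (d : ℕ)
    (b : Polynomial k) (hb : b.degree ≤ (d : ℕ)) :
    ∃! u : Polynomial k, u.degree ≤ (d : ℕ) ∧
      Polynomial.C a₂ * u.comp (Polynomial.X + 1) - Polynomial.C a₁ * u = b := by
  simp only [← shiftDiff_apply]
  obtain ⟨hinj, hsurj⟩ := bijective_of_forall_degree_eq _ (degree_shiftDiff hne)
  obtain ⟨u, hu⟩ := hsurj b
  refine ⟨u, ⟨?_, hu⟩, fun v hv => hinj (hv.2.trans hu.symm)⟩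
  rwa [← degree_shiftDiff hne, hu]

/-- From the proof of Proposition 3.12 in Ghioca–Xie: for distinct nonzero `a₁, a₂ ∈ k` and
`d ∈ ℕ`, for every `b ∈ k[x]` with `deg b ≤ d` there is a unique `u ∈ k[x]` with `deg u ≤ d`
and `a₂·u(x+1) − a₁·u(x) = b(x)`; i.e. the linear map `P(x) ↦ a₂·P(x+1) − a₁·P(x)` on
polynomials of degree at most `d` is bijective. -/
theorem stmt13 {k : Type*} [Field k] [CharZero k] (a₁ a₂ : k)
    (h₁ : a₁ ≠ 0) (h₂ : a₂ ≠ 0) (hne : a₁ ≠ a₂) (d : ℕ)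
    (b : Polynomial k) (hb : b.degree ≤ (d : ℕ)) :
    ∃! u : Polynomial k, u.degree ≤ (d : ℕ) ∧
      Polynomial.C a₂ * u.comp (Polynomial.X + 1) - Polynomial.C a₁ * u = b :=
  stmt13_general a₁ a₂ hne d b hb
end
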